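/- arXiv:2207.11014 — 2 statements merged into one kernel-verified Lean document; each statement's English description precedes it below -/
import Mathlib

section
/- Let N ≥ 1 and 1 ≤ K ≤ N be integers, let w ∈ ℝ^N be a nonzero vector with nonnegative entries, and let H ⊆ {1,…,N} be a top-K set for w. Let ψ and φ = |w⟩ ⊗ e₀ be as defined (ψ(i,0) = √(w_i/Z), ψ(i,1) = 0 for i ∈ H, ψ(i,1) = √((m − w_i)/Z) for i ∉ H; φ(i,0) = √(w_i/W), φ(i,1) = 0). Then the squared inner product ⟨ψ, φ⟩² is at least K/N. -/
open scoped RealInnerProductSpace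
open Finset

/-!
Only the `e₀` components meet, so `⟪ψ, φ⟫ = ∑ᵢ wᵢ / √(Z W) = √(W / Z)` and the claim is `K Z ≤ N W`.
Since `m` is the minimum over `H`, `K m ≤ ∑_H w ≤ W`, hence
`K Z = K (N - K) m + K ∑_H w ≤ (N - K) ∑_H w + K ∑_H w ≤ N W`.
-/

theorem inner_eq_sum_of_apply_one_eq_zero {ι : Type*} [Fintype ι]
    (ψ φ : EuclideanSpace ℝ (ι × Fin 2)) (hφ1 : ∀ i, φ (i, 1) = 0) :
    ⟪ψ, φ⟫ = ∑ i, ψ (i, 0) * φ (i, 0) := by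
  simp [PiLp.inner_apply, Fintype.sum_prod_type, Fin.sum_univ_two, hφ1, mul_comm]

theorem sum_sqrt_div_mul_sqrt_div {ι : Type*} (s : Finset ι) (a : ι → ℝ) (ha : ∀ i, 0 ≤ a i)
    (Z W : ℝ) :
    ∑ i ∈ s, √(a i / Z) * √(a i / W) = (∑ i ∈ s, a i) / (√Z * √W) := by
  rw [sum_div]
  refine sum_congr rfl fun i _ => ?_
  rw [Real.sqrt_div (ha i), Real.sqrt_div (ha i), div_mul_div_comm, Real.mul_self_sqrt (ha i)]

theorem sq_div_sqrt_mul_sqrt {Z W : ℝ} (hZ : 0 ≤ Z) (hW : 0 < W) :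
    (W / (√Z * √W)) ^ 2 = W / Z := by
  rw [div_pow, mul_pow, Real.sq_sqrt hZ, Real.sq_sqrt hW.le]
  field_simp

section TopSet

variable {ι : Type*} {w : ι → ℝ} {s : Finset ι}

theorem sum_pos_of_forall_notMem_le (hw : ∀ i, 0 ≤ w i) (hw0 : w ≠ 0) (hs : s.Nonempty)
    (htop : ∀ i ∈ s, ∀ j ∉ s, w j ≤ w i) : 0 < ∑ i ∈ s, w i := by
  obtain ⟨j, hj⟩ := Function.ne_iff.mp hw0
  obtain ⟨i, hi, hji⟩ : ∃ i ∈ s, 0 < w i := by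
    by_cases hjs : j ∈ s
    · exact ⟨j, hjs, (hw j).lt_of_ne' hj⟩
    · obtain ⟨i, hi⟩ := hs
      exact ⟨i, hi, ((hw j).lt_of_ne' hj).trans_le (htop i hi j hjs)⟩
  exact hji.trans_le (single_le_sum (fun k _ => hw k) hi)

theorem zero_lt_card_sub_mul_inf'_add_sum [Fintype ι] (hw : ∀ i, 0 ≤ w i) (hs : s.Nonempty)
    (hpos : 0 < ∑ i ∈ s, w i) :
    0 < ((Fintype.card ι : ℝ) - #s) * s.inf' hs w + ∑ i ∈ s, w i := by
  have hsN : (#s : ℝ) ≤ Fintype.card ι := by exact_mod_cast card_le_univ s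
  have hm : 0 ≤ s.inf' hs w := le_inf' hs w fun i _ => hw i
  nlinarith

theorem card_div_card_le_sum_div [Fintype ι] (hw : ∀ i, 0 ≤ w i) (hs : s.Nonempty)
    (hpos : 0 < ∑ i ∈ s, w i) :
    (#s : ℝ) / Fintype.card ι ≤
      (∑ i, w i) / ((Fintype.card ι - #s) * s.inf' hs w + ∑ i ∈ s, w i) := by
  have hsN : (#s : ℝ) ≤ Fintype.card ι := by exact_mod_cast card_le_univ s
  have hKm : #s * s.inf' hs w ≤ ∑ i ∈ s, w i := by
    simpa using card_nsmul_le_sum s w _ fun i hi => inf'_le w hi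
  have hsW : ∑ i ∈ s, w i ≤ ∑ i, w i :=
    sum_le_sum_of_subset_of_nonneg (subset_univ s) fun i _ _ => hw i
  have hN : (0 : ℝ) < Fintype.card ι := by exact_mod_cast hs.card_pos.trans_le (card_le_univ s)
  rw [div_le_div_iff₀ hN (zero_lt_card_sub_mul_inf'_add_sum hw hs hpos)]
  nlinarith [mul_le_mul_of_nonneg_left hKm (sub_nonneg.2 hsN)]

end TopSet

theorem inner_psi_phi_sq_ge_general (N K : ℕ)
    (w : Fin N → ℝ) (hw : ∀ i, 0 ≤ w i) (hw0 : w ≠ 0)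
    (H : Finset (Fin N)) (hHne : H.Nonempty) (hHcard : H.card = K)
    (htop : ∀ i ∈ H, ∀ j ∉ H, w j ≤ w i)
    (W m Z : ℝ) (hW : W = ∑ i, w i) (hm : m = H.inf' hHne w)
    (hZ : Z = ((N : ℝ) - K) * m + ∑ i ∈ H, w i)
    (ψ φ : EuclideanSpace ℝ (Fin N × Fin 2))
    (hψ0 : ∀ i, ψ (i, 0) = Real.sqrt (w i / Z))
    (hφ0 : ∀ i, φ (i, 0) = Real.sqrt (w i / W))
    (hφ1 : ∀ i, φ (i, 1) = 0) :
    (K : ℝ) / N ≤ ⟪ψ, φ⟫ ^ 2 := by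
  subst hW hm hZ hHcard
  have hSH := sum_pos_of_forall_notMem_le hw hw0 hHne htop
  have hZ := zero_lt_card_sub_mul_inf'_add_sum hw hHne hSH
  have hW : 0 < ∑ i, w i :=
    hSH.trans_le (sum_le_sum_of_subset_of_nonneg (subset_univ H) fun i _ _ => hw i)
  rw [Fintype.card_fin] at hZ
  rw [inner_eq_sum_of_apply_one_eq_zero ψ φ hφ1]
  simp only [hψ0, hφ0]
  rw [sum_sqrt_div_mul_sqrt_div _ w hw, sq_div_sqrt_mul_sqrt hZ.le hW]
  simpa using card_div_card_le_sum_div hw hHne hSH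

/-- The squared inner product between the state `ψ` produced by the circuit `𝒞` and the target
state `φ = |w⟩ ⊗ e₀` is at least `K/N`. -/
theorem inner_psi_phi_sq_ge (N K : ℕ) (hN : 1 ≤ N) (hK : 1 ≤ K) (hKN : K ≤ N)
    (w : Fin N → ℝ) (hw : ∀ i, 0 ≤ w i) (hw0 : w ≠ 0)
    (H : Finset (Fin N)) (hHne : H.Nonempty) (hHcard : H.card = K)
    (htop : ∀ i ∈ H, ∀ j ∉ H, w j ≤ w i)
    (W m Z : ℝ) (hW : W = ∑ i, w i) (hm : m = H.inf' hHne w)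
    (hZ : Z = ((N : ℝ) - K) * m + ∑ i ∈ H, w i)
    (ψ φ : EuclideanSpace ℝ (Fin N × Fin 2))
    (hψ0 : ∀ i, ψ (i, 0) = Real.sqrt (w i / Z))
    (hψ1 : ∀ i, ψ (i, 1) = if i ∈ H then 0 else Real.sqrt ((m - w i) / Z))
    (hφ0 : ∀ i, φ (i, 0) = Real.sqrt (w i / W))
    (hφ1 : ∀ i, φ (i, 1) = 0) :
    (K : ℝ) / N ≤ ⟪ψ, φ⟫ ^ 2 :=
  inner_psi_phi_sq_ge_general N K w hw hw0 H hHne hHcard htop W m Z hW hm hZ ψ φ hψ0 hφ0 hφ1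
end

section
/- Let N ≥ 1 and 1 ≤ K ≤ N be integers, let w ∈ ℝ^N be a nonzero vector with nonnegative entries, and let H ⊆ {1,…,N} be a top-K set for w, with W = ∑_{i=1}^N w_i, m = min_{i ∈ H} w_i, Z = (N−K)·m + ∑_{i ∈ H} w_i. Let ψ(i,0) = √(w_i/Z), ψ(i,1) = 0 for i ∈ H, ψ(i,1) = √((m − w_i)/Z) for i ∉ H, and φ(i,0) = √(w_i/W), φ(i,1) = 0. If W < Z, then there exists a unit vector χ in the Euclidean space indexed by {1,…,N} × {0,1} with χ(i,0) = 0 for all i (hence χ is orthogonal to φ), such that ψ = √(W/Z)·φ + √(1 − W/Z)·χ. -/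
/-!
On the `0` sector `ψ` is exactly `√(W/Z) • φ`, so `v := ψ - √(W/Z) • φ` lives on the `1` sector,
where `‖v‖² = ∑_{i ∉ H} (m - w i) / Z = (Z - W) / Z`: the entries `m - w i` are nonnegative because
`H` is a top-`K` set, and they add up to `Z - W` by the definition of `Z`. Hence `χ := v / ‖v‖`.
-/

open Finset

lemma Real.sqrt_div_mul_sqrt_div {a b : ℝ} (ha : 0 ≤ a) (hab : a ≤ b) (c : ℝ) :
    √(b / c) * √(a / b) = √(a / c) := by
  rcases eq_or_ne b 0 with rfl | hb
  · obtain rfl : a = 0 := le_antisymm hab ha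
    simp
  · rw [← Real.sqrt_mul' _ (div_nonneg ha (ha.trans hab))]
    congr 1
    field_simp

lemma EuclideanSpace.norm_sq_eq_sum_of_apply_zero {ι : Type*} [Fintype ι]
    {v : EuclideanSpace ℝ (ι × Fin 2)} (hv : ∀ i, v (i, 0) = 0) :
    ‖v‖ ^ 2 = ∑ i, v (i, 1) ^ 2 := by
  simp [EuclideanSpace.norm_sq_eq, Fintype.sum_prod_type, Fin.sum_univ_two, hv]

lemma Finset.sum_compl_sub {ι : Type*} [Fintype ι] [DecidableEq ι] (H : Finset ι) (w : ι → ℝ)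
    (m : ℝ) :
    ∑ i ∈ Hᶜ, (m - w i) = ((Fintype.card ι : ℝ) - #H) * m + ∑ i ∈ H, w i - ∑ i, w i := by
  rw [sum_sub_distrib, sum_const, card_compl, nsmul_eq_mul, Nat.cast_sub (card_le_univ H),
    ← sum_compl_add_sum H]
  ring

theorem psi_decomposition_general (N K : ℕ)
    (w : Fin N → ℝ) (hw : ∀ i, 0 ≤ w i)
    (H : Finset (Fin N)) (hHne : H.Nonempty) (hHcard : H.card = K)
    (htop : ∀ i ∈ H, ∀ j ∉ H, w j ≤ w i)
    (W m Z : ℝ) (hW : W = ∑ i, w i) (hm : m = H.inf' hHne w)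
    (hZ : Z = ((N : ℝ) - K) * m + ∑ i ∈ H, w i)
    (hWZ : W < Z)
    (ψ φ : EuclideanSpace ℝ (Fin N × Fin 2))
    (hψ0 : ∀ i, ψ (i, 0) = Real.sqrt (w i / Z))
    (hψ1 : ∀ i, ψ (i, 1) = if i ∈ H then 0 else Real.sqrt ((m - w i) / Z))
    (hφ0 : ∀ i, φ (i, 0) = Real.sqrt (w i / W))
    (hφ1 : ∀ i, φ (i, 1) = 0) :
    ∃ χ : EuclideanSpace ℝ (Fin N × Fin 2), ‖χ‖ = 1 ∧ (∀ i, χ (i, 0) = 0) ∧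
      ψ = Real.sqrt (W / Z) • φ + Real.sqrt (1 - W / Z) • χ := by
  have hZ0 : 0 < Z := (hW ▸ sum_nonneg fun i _ => hw i).trans_lt hWZ
  have hwm : ∀ j ∉ H, 0 ≤ m - w j := fun j hj =>
    sub_nonneg.2 (hm ▸ le_inf' hHne w fun i hi => htop i hi j hj)
  set v := ψ - √(W / Z) • φ with hv
  have hv0 : ∀ i, v (i, 0) = 0 := fun i => by
    have hwW : w i ≤ W := hW ▸ single_le_sum (fun j _ => hw j) (mem_univ i)
    simp [hv, hψ0, hφ0, Real.sqrt_div_mul_sqrt_div (hw i) hwW]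
  have hv_sq : ‖v‖ ^ 2 = 1 - W / Z := by
    have hsum : ∑ i ∈ Hᶜ, (m - w i) = Z - W := by
      rw [sum_compl_sub, Fintype.card_fin, hHcard, ← hZ, ← hW]
    calc ‖v‖ ^ 2 = ∑ i ∈ Hᶜ, (m - w i) / Z := by
          rw [EuclideanSpace.norm_sq_eq_sum_of_apply_zero hv0, ← sum_compl_add_sum H,
            sum_eq_zero (s := H) fun i hi => by simp [hv, hψ1, hφ1, hi], add_zero]
          refine sum_congr rfl fun i hi => ?_
          have hi := mem_compl.1 hi
          simp [hv, hψ1, hφ1, hi, Real.sq_sqrt (div_nonneg (hwm i hi) hZ0.le)]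
      _ = 1 - W / Z := by rw [← sum_div, hsum]; field_simp
  have hv_norm : ‖v‖ = √(1 - W / Z) := by rw [← hv_sq, Real.sqrt_sq (norm_nonneg v)]
  have hv_ne : v ≠ 0 := norm_pos_iff.1 <| hv_norm ▸ Real.sqrt_pos.2 <| by
    rw [sub_pos, div_lt_one hZ0]; exact hWZ
  refine ⟨‖v‖⁻¹ • v, norm_smul_inv_norm hv_ne, fun i => by simp [hv0], ?_⟩
  rw [← hv_norm, smul_inv_smul₀ (norm_ne_zero_iff.2 hv_ne), hv, add_sub_cancel]

/-- If `W < Z`, the state `ψ` decomposes as `√(W/Z)·φ + √(1 - W/Z)·χ` for some unit vector `χ`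
supported on the `1` sector (hence orthogonal to `φ = |w⟩ ⊗ e₀`). -/
theorem psi_decomposition (N K : ℕ) (hN : 1 ≤ N) (hK : 1 ≤ K) (hKN : K ≤ N)
    (w : Fin N → ℝ) (hw : ∀ i, 0 ≤ w i) (hw0 : w ≠ 0)
    (H : Finset (Fin N)) (hHne : H.Nonempty) (hHcard : H.card = K)
    (htop : ∀ i ∈ H, ∀ j ∉ H, w j ≤ w i)
    (W m Z : ℝ) (hW : W = ∑ i, w i) (hm : m = H.inf' hHne w)
    (hZ : Z = ((N : ℝ) - K) * m + ∑ i ∈ H, w i)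
    (hWZ : W < Z)
    (ψ φ : EuclideanSpace ℝ (Fin N × Fin 2))
    (hψ0 : ∀ i, ψ (i, 0) = Real.sqrt (w i / Z))
    (hψ1 : ∀ i, ψ (i, 1) = if i ∈ H then 0 else Real.sqrt ((m - w i) / Z))
    (hφ0 : ∀ i, φ (i, 0) = Real.sqrt (w i / W))
    (hφ1 : ∀ i, φ (i, 1) = 0) :
    ∃ χ : EuclideanSpace ℝ (Fin N × Fin 2), ‖χ‖ = 1 ∧ (∀ i, χ (i, 0) = 0) ∧
      ψ = Real.sqrt (W / Z) • φ + Real.sqrt (1 - W / Z) • χ :=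
  psi_decomposition_general N K w hw H hHne hHcard htop W m Z hW hm hZ hWZ ψ φ hψ0 hψ1 hφ0 hφ1
end
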